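/- The cubic polynomial 6930·t³ − 35640·t² − 31680·t − 10560 has exactly one real root, namely C = (2/21)·(18 + (6·(1875 − 7·√4233))^(1/3) + (6·(1875 + 7·√4233))^(1/3)); here 1875 − 7·√4233 > 0, so both cube roots are cube roots of positive real numbers. -/

import Mathlib

/-!
Substituting `w = (21 t − 36) / 2` turns the polynomial into `(2640/441) (w³ − 1476 w − 22500)`.
This depressed cubic has discriminant `4·1476³ − 27·22500² < 0`, hence a single real root, and
Cardano's formula gives that root as `∛a + ∛b` with `a, b = 6 (1875 ∓ 7√4233)`, since
`a + b = 22500` and `3 ∛(a b) = 3 · 492 = 1476`.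
-/

namespace Real

lemma rpow_one_third_pow_three {x : ℝ} (hx : 0 ≤ x) : (x ^ ((1 : ℝ) / 3)) ^ 3 = x := by
  simpa [one_div] using rpow_inv_natCast_pow hx (n := 3) (by norm_num)

lemma pow_three_rpow_one_third {x : ℝ} (hx : 0 ≤ x) : (x ^ 3) ^ ((1 : ℝ) / 3) = x := by
  simpa [one_div] using pow_rpow_inv_natCast hx (n := 3) (by norm_num)

lemma rpow_one_third_add_rpow_one_third_pow_three {a b : ℝ} (ha : 0 ≤ a) (hb : 0 ≤ b) :
    (a ^ ((1 : ℝ) / 3) + b ^ ((1 : ℝ) / 3)) ^ 3 =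
      3 * (a * b) ^ ((1 : ℝ) / 3) * (a ^ ((1 : ℝ) / 3) + b ^ ((1 : ℝ) / 3)) + (a + b) := by
  rw [mul_rpow ha hb]
  linear_combination rpow_one_third_pow_three ha + rpow_one_third_pow_three hb

end Real

lemma eq_of_pow_three_eq_of_discrim_neg {R : Type*} [CommRing R] [LinearOrder R]
    [IsStrictOrderedRing R] {p q s w : R} (hdisc : 4 * p ^ 3 < 27 * q ^ 2)
    (hs : s ^ 3 = p * s + q) (hw : w ^ 3 = p * w + q) : w = s := by
  -- the discriminant of the cubic is that of its quadratic cofactor times a square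
  have hfactor : 4 * p ^ 3 - 27 * q ^ 2 = (4 * p - 3 * s ^ 2) * (3 * s ^ 2 - p) ^ 2 := by
    rw [show q = s ^ 3 - p * s by linarith]; ring
  have hcofactor : 4 * p - 3 * s ^ 2 < 0 :=
    neg_of_mul_neg_left (hfactor ▸ sub_neg.mpr hdisc) (sq_nonneg _)
  have hquad : w ^ 2 + s * w + s ^ 2 - p ≠ 0 := by
    nlinarith [sq_nonneg (2 * w + s)]
  have hprod : (w - s) * (w ^ 2 + s * w + s ^ 2 - p) = 0 := by
    linear_combination hw - hs
  exact sub_eq_zero.mp ((mul_eq_zero.mp hprod).resolve_right hquad)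

lemma sqrt_4233_lt : Real.sqrt 4233 < 66 := by
  rw [Real.sqrt_lt' (by norm_num)]; norm_num

/-- The cubic polynomial `6930 t³ − 35640 t² − 31680 t − 10560` has exactly one real root,
namely `C = (2/21)(18 + (6(1875 − 7√4233))^(1/3) + (6(1875 + 7√4233))^(1/3))`;
moreover `1875 − 7√4233 > 0`, so both cube roots are cube roots of positive reals. -/
theorem cubic_unique_real_root :
    1875 - 7 * Real.sqrt 4233 > 0 ∧
    (∀ t : ℝ, 6930 * t ^ 3 - 35640 * t ^ 2 - 31680 * t - 10560 = 0 ↔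
      t = (2 / 21) * (18 + (6 * (1875 - 7 * Real.sqrt 4233)) ^ ((1 : ℝ) / 3) +
        (6 * (1875 + 7 * Real.sqrt 4233)) ^ ((1 : ℝ) / 3))) := by
  have hc := sqrt_4233_lt
  have hc0 := Real.sqrt_nonneg 4233
  have hprod : 6 * (1875 - 7 * Real.sqrt 4233) * (6 * (1875 + 7 * Real.sqrt 4233)) =
      (492 : ℝ) ^ 3 := by
    linear_combination (-1764 : ℝ) * Real.sq_sqrt (show (0 : ℝ) ≤ 4233 by norm_num)
  set s := (6 * (1875 - 7 * Real.sqrt 4233)) ^ ((1 : ℝ) / 3) +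
    (6 * (1875 + 7 * Real.sqrt 4233)) ^ ((1 : ℝ) / 3)
  have hs : s ^ 3 = 1476 * s + 22500 := by
    rw [Real.rpow_one_third_add_rpow_one_third_pow_three (by linarith) (by linarith), hprod,
      Real.pow_three_rpow_one_third (by norm_num)]
    ring
  refine ⟨by linarith, fun t => ?_⟩
  rw [show 18 + (6 * (1875 - 7 * Real.sqrt 4233)) ^ ((1 : ℝ) / 3) +
      (6 * (1875 + 7 * Real.sqrt 4233)) ^ ((1 : ℝ) / 3) = 18 + s by ring]
  constructor
  · intro ht
    have hw := eq_of_pow_three_eq_of_discrim_neg (by norm_num) hs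
      (w := (21 * t - 36) / 2) (by linear_combination (441 / 2640 : ℝ) * ht)
    linarith
  · rintro rfl
    linear_combination (2640 / 441 : ℝ) * hs
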